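/- arXiv:math/0308025 — 2 statements merged into one kernel-verified Lean document; each statement's English description precedes it below -/
import Mathlib

section
/- Suppose δ_k > 1 (i.e., a_k > r_k) for all k ∈ ℕ. Then the distribution of φ = Σ_{k=1}^∞ φ_k a_k is purely discrete (i.e., there is a countable set of full measure) if and only if the infinite product Π_{k=1}^∞ max{p_{0k}, p_{1k}} is strictly positive. -/
/-!
Since every digit outweighs all later ones (`a k > r k`), the map `ω ↦ ∑ ωₖ aₖ` is injective on
`{0,1}^ℕ`, so the distribution of `φ` is purely discrete iff the product measure `P` is. If
`∏ max (p₀ k) (p₁ k) = 0`, each point has `P`-mass at most `∏_{k<n} max (p₀ k) (p₁ k) → 0`, so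
`P` has no atoms and no countable set carries mass. If the product is positive, the countable set
of sequences that eventually take the more likely digit has full mass: those doing so from `n` on
have mass `∏_{k≥n} max (p₀ k) (p₁ k) → 1`.
-/

open MeasureTheory

/-- The Bernoulli measure on `Bool` giving mass `p₀` to `false` (value `0`) and
mass `p₁` to `true` (value `1`). -/
noncomputable def bernoulliMeasure (p₀ p₁ : ℝ) : Measure Bool :=
  ENNReal.ofReal p₀ • Measure.dirac false + ENNReal.ofReal p₁ • Measure.dirac true

/-- `P` is the infinite product of the measures `μ k` on `Bool`: every
finite-dimensional cylinder set gets the product of the coordinate measures. -/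
def IsProductMeasure (μ : ℕ → Measure Bool) (P : Measure (ℕ → Bool)) : Prop :=
  ∀ (s : Finset ℕ) (E : ℕ → Set Bool),
    P {ω | ∀ k ∈ s, ω k ∈ E k} = ∏ k ∈ s, μ k (E k)

open Filter Topology
open scoped ENNReal

noncomputable def bitSeries (a : ℕ → ℝ) (ω : ℕ → Bool) : ℝ :=
  ∑' k, if ω k then a k else 0

section bitSeries

variable {a : ℕ → ℝ}

lemma summable_bitSeries_terms (ha : ∀ k, 0 ≤ a k) (hs : Summable a) (ω : ℕ → Bool) :
    Summable fun k => if ω k then a k else 0 :=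
  hs.of_nonneg_of_le (fun k => by split <;> simp [ha k]) (fun k => by split <;> simp [ha k])

lemma measurable_bitSeries (ha : ∀ k, 0 ≤ a k) (hs : Summable a) :
    Measurable (bitSeries a) := by
  refine measurable_of_tendsto_metrizable
    (f := fun n ω => ∑ k ∈ Finset.range n, if ω k then a k else 0) (fun n => ?_) ?_
  · exact Finset.measurable_sum _ fun k _ =>
      (measurable_of_countable fun b : Bool => if b then a k else 0).comp (measurable_pi_apply k)
  · exact tendsto_pi_nhds.2 fun ω => (summable_bitSeries_terms ha hs ω).hasSum.tendsto_sum_nat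

lemma bitSeries_lt_of_agree_of_lt (ha : ∀ k, 0 ≤ a k) (hs : Summable a) {k : ℕ}
    (hgap : ∑' i, a (k + 1 + i) < a k) {ω ω' : ℕ → Bool} (hagree : ∀ j < k, ω j = ω' j)
    (hω : ω k = false) (hω' : ω' k = true) : bitSeries a ω < bitSeries a ω' := by
  set g : (ℕ → Bool) → ℕ → ℝ := fun ω j => if ω j then a j else 0
  have hsplit (ω) : bitSeries a ω =
      ∑ j ∈ Finset.range k, g ω j + g ω k + ∑' i, g ω (i + (k + 1)) := by
    rw [← Finset.sum_range_succ, (summable_bitSeries_terms ha hs ω).sum_add_tsum_nat_add]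
    rfl
  have hhead : ∑ j ∈ Finset.range k, g ω j = ∑ j ∈ Finset.range k, g ω' j :=
    Finset.sum_congr rfl fun j hj => by simp only [g, hagree j (Finset.mem_range.1 hj)]
  have htail : ∑' i, g ω (i + (k + 1)) < a k := calc
    _ ≤ ∑' i, a (k + 1 + i) := by
      refine Summable.tsum_le_tsum (fun i => ?_)
        ((summable_bitSeries_terms ha hs ω).comp_injective (add_left_injective _))
        (hs.comp_injective (add_right_injective _))
      simp only [g, add_comm i]; split <;> simp [ha]
    _ < a k := hgap
  have htail' : 0 ≤ ∑' i, g ω' (i + (k + 1)) :=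
    tsum_nonneg fun i => by simp only [g]; split <;> simp [ha]
  rw [hsplit, hsplit, hhead]
  simp only [g, hω, hω', Bool.false_eq_true, ↓reduceIte]
  linarith

lemma bitSeries_injective (ha : ∀ k, 0 ≤ a k) (hs : Summable a)
    (hgap : ∀ k, ∑' i, a (k + 1 + i) < a k) : Function.Injective (bitSeries a) := by
  intro ω ω' heq
  by_contra hne
  have hdiff : ∃ k, ω k ≠ ω' k := Function.ne_iff.1 hne
  set k := Nat.find hdiff
  have hagree : ∀ j < k, ω j = ω' j := fun j hj => not_not.1 (Nat.find_min hdiff hj)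
  cases hω : ω k <;> cases hω' : ω' k
  · exact Nat.find_spec hdiff (hω.trans hω'.symm)
  · exact (bitSeries_lt_of_agree_of_lt ha hs (hgap k) hagree hω hω').ne heq
  · exact (bitSeries_lt_of_agree_of_lt ha hs (hgap k) (fun j hj => (hagree j hj).symm) hω'
      hω).ne heq.symm
  · exact Nat.find_spec hdiff (hω.trans hω'.symm)

end bitSeries

lemma bernoulliMeasure_singleton (p₀ p₁ : ℝ) (b : Bool) :
    bernoulliMeasure p₀ p₁ {b} = ENNReal.ofReal (if b then p₁ else p₀) := by
  cases b <;> simp [bernoulliMeasure]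

lemma bernoulliMeasure_singleton_le (p₀ p₁ : ℝ) (b : Bool) :
    bernoulliMeasure p₀ p₁ {b} ≤ ENNReal.ofReal (max p₀ p₁) := by
  rw [bernoulliMeasure_singleton]
  exact ENNReal.ofReal_le_ofReal (by split <;> simp)

lemma bernoulliMeasure_singleton_decide_le (p₀ p₁ : ℝ) :
    bernoulliMeasure p₀ p₁ {decide (p₀ ≤ p₁)} = ENNReal.ofReal (max p₀ p₁) := by
  rw [bernoulliMeasure_singleton]
  by_cases h : p₀ ≤ p₁
  · simp [h]
  · simp [h, (lt_of_not_ge h).le]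

namespace IsProductMeasure

variable {μ : ℕ → Measure Bool} {P : Measure (ℕ → Bool)}

lemma measure_univ (hP : IsProductMeasure μ P) : P Set.univ = 1 := by
  simpa using hP ∅ fun _ => ∅

lemma isProbabilityMeasure (hP : IsProductMeasure μ P) : IsProbabilityMeasure P :=
  ⟨hP.measure_univ⟩

lemma measure_cylinder (hP : IsProductMeasure μ P) (s : Finset ℕ) (b : ℕ → Bool) :
    P {ω | ∀ k ∈ s, ω k = b k} = ∏ k ∈ s, μ k {b k} := by
  simpa only [Set.mem_singleton_iff] using hP s fun k => {b k}

lemma measure_singleton_le (hP : IsProductMeasure μ P) (ω : ℕ → Bool) (n : ℕ) :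
    P {ω} ≤ ∏ k ∈ Finset.range n, μ k {ω k} := by
  rw [← hP.measure_cylinder]
  exact measure_mono fun ω' hω' k _ => by rw [Set.mem_singleton_iff.1 hω']

lemma le_measure_forall_ge_eq (hP : IsProductMeasure μ P) {b : ℕ → Bool} {n : ℕ} {x : ℝ≥0∞}
    (hx : ∀ m, x ≤ ∏ k ∈ Finset.Ico n m, μ k {b k}) :
    x ≤ P {ω | ∀ k, n ≤ k → ω k = b k} := by
  have := hP.isProbabilityMeasure
  set C : ℕ → Set (ℕ → Bool) := fun m => {ω | ∀ k ∈ Finset.Ico n m, ω k = b k}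
  have hC : {ω | ∀ k, n ≤ k → ω k = b k} = ⋂ m, C m := by
    ext ω
    simp only [C, Set.mem_ofPred_eq, Set.mem_iInter, Finset.mem_Ico]
    exact ⟨fun h m k hk => h k hk.1, fun h k hk => h (k + 1) k ⟨hk, k.lt_succ_self⟩⟩
  have hanti : Antitone C := fun m m' hm ω hω k hk =>
    hω k (Finset.Ico_subset_Ico le_rfl hm hk)
  rw [hC]
  refine ge_of_tendsto' (tendsto_measure_iInter_atTop (fun m => ?_) hanti
    ⟨0, measure_ne_top P _⟩) fun m => (hx m).trans_eq (hP.measure_cylinder _ b).symm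
  exact (by measurability : MeasurableSet (C m)).nullMeasurableSet

end IsProductMeasure

section PartialProducts

variable {q : ℕ → ℝ}

lemma antitone_prod_range (hq0 : ∀ k, 0 ≤ q k) (hq1 : ∀ k, q k ≤ 1) :
    Antitone fun n => ∏ k ∈ Finset.range n, q k :=
  antitone_nat_of_succ_le fun n => by
    rw [Finset.prod_range_succ]
    exact mul_le_of_le_one_right (Finset.prod_nonneg fun k _ => hq0 k) (hq1 n)

lemma tendsto_prod_range_iInf (hq0 : ∀ k, 0 ≤ q k) (hq1 : ∀ k, q k ≤ 1) :
    Tendsto (fun n => ∏ k ∈ Finset.range n, q k) atTop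
      (𝓝 (⨅ n, ∏ k ∈ Finset.range n, q k)) :=
  tendsto_atTop_ciInf (antitone_prod_range hq0 hq1)
    ⟨0, by rintro _ ⟨n, rfl⟩; exact Finset.prod_nonneg fun k _ => hq0 k⟩

end PartialProducts

lemma countable_setOf_eventually_eq {α : Type*} [Finite α] (b : ℕ → α) :
    {ω : ℕ → α | ∀ᶠ k in atTop, ω k = b k}.Countable := by
  simp only [eventually_atTop, Set.ofPred_exists]
  refine Set.countable_iUnion fun n => Set.Finite.countable ?_
  refine Set.Finite.of_finite_image (f := fun ω (i : Fin n) => ω i) (Set.toFinite _) ?_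
  intro ω hω ω' hω' h
  funext k
  rcases lt_or_ge k n with hk | hk
  · exact congrFun h ⟨k, hk⟩
  · rw [hω k hk, hω' k hk]

section Discrete

variable {α β : Type*} [MeasurableSpace α] [MeasurableSpace β] {μ : Measure α} {f : α → β}

lemma map_apply_countable_eq_zero [MeasurableSingletonClass β] [NullSingletonClass μ]
    (hf : Measurable f) (hinj : Function.Injective f) {D : Set β} (hD : D.Countable) :
    μ.map f D = 0 := by
  rw [Measure.map_apply hf hD.measurableSet]
  exact (hD.preimage hinj).measure_zero μ

lemma map_image_eq_one [IsProbabilityMeasure μ] (hf : Measurable f) {T : Set α} (hT : μ T = 1) :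
    μ.map f (f '' T) = 1 := by
  have := Measure.isProbabilityMeasure_map (μ := μ) hf.aemeasurable
  refine le_antisymm prob_le_one ?_
  calc 1 = μ T := hT.symm
    _ ≤ μ (f ⁻¹' (f '' T)) := measure_mono (Set.subset_preimage_image f T)
    _ ≤ μ.map f (f '' T) := Measure.le_map_apply hf.aemeasurable _

end Discrete

section BernoulliProduct

variable {p₀ p₁ : ℕ → ℝ} {P : Measure (ℕ → Bool)}

lemma measure_singleton_eq_zero_of_iInf_prod_max_eq_zero
    (hP : IsProductMeasure (fun k => bernoulliMeasure (p₀ k) (p₁ k)) P)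
    (hM0 : ∀ k, 0 ≤ max (p₀ k) (p₁ k)) (hM1 : ∀ k, max (p₀ k) (p₁ k) ≤ 1)
    (h : ⨅ n, ∏ k ∈ Finset.range n, max (p₀ k) (p₁ k) = 0) (ω : ℕ → Bool) : P {ω} = 0 := by
  have hlim : Tendsto (fun n => ENNReal.ofReal (∏ k ∈ Finset.range n, max (p₀ k) (p₁ k)))
      atTop (𝓝 0) := by
    simpa [h] using ENNReal.tendsto_ofReal (tendsto_prod_range_iInf hM0 hM1)
  refine nonpos_iff_eq_zero.1 (ge_of_tendsto' hlim fun n => ?_)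
  rw [ENNReal.ofReal_prod_of_nonneg fun k _ => hM0 k]
  exact (hP.measure_singleton_le ω n).trans
    (Finset.prod_le_prod' fun k _ => bernoulliMeasure_singleton_le _ _ _)

lemma measure_eventually_eq_decide_le_eq_one
    (hP : IsProductMeasure (fun k => bernoulliMeasure (p₀ k) (p₁ k)) P)
    (hM0 : ∀ k, 0 < max (p₀ k) (p₁ k)) (hM1 : ∀ k, max (p₀ k) (p₁ k) ≤ 1)
    (hpos : 0 < ⨅ n, ∏ k ∈ Finset.range n, max (p₀ k) (p₁ k)) :
    P {ω | ∀ᶠ k in atTop, ω k = decide (p₀ k ≤ p₁ k)} = 1 := by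
  have := hP.isProbabilityMeasure
  set c : ℕ → ℝ := fun n => ∏ k ∈ Finset.range n, max (p₀ k) (p₁ k)
  have hc0 n : 0 < c n := Finset.prod_pos fun k _ => hM0 k
  have hc : Tendsto c atTop (𝓝 (⨅ n, c n)) := tendsto_prod_range_iInf (fun k => (hM0 k).le) hM1
  have hinf m : ⨅ n, c n ≤ c m := ciInf_le ⟨0, by rintro _ ⟨n, rfl⟩; exact (hc0 n).le⟩ m
  have hratio : Tendsto (fun n => ENNReal.ofReal ((⨅ n, c n) / c n)) atTop (𝓝 1) := by
    simpa [div_self hpos.ne'] using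
      ENNReal.tendsto_ofReal ((tendsto_const_nhds (x := ⨅ n, c n)).div hc hpos.ne')
  have hS n : ENNReal.ofReal ((⨅ n, c n) / c n) ≤
      P {ω | ∀ k, n ≤ k → ω k = decide (p₀ k ≤ p₁ k)} := by
    refine hP.le_measure_forall_ge_eq fun m => ?_
    simp only [bernoulliMeasure_singleton_decide_le]
    rw [← ENNReal.ofReal_prod_of_nonneg fun k _ => (hM0 k).le]
    refine ENNReal.ofReal_le_ofReal ((div_le_iff₀' (hc0 n)).2 ?_)
    rcases le_total n m with hnm | hmn
    · rw [Finset.prod_range_mul_prod_Ico _ hnm]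
      exact hinf m
    · simpa [Finset.Ico_eq_empty_of_le hmn] using hinf n
  refine le_antisymm prob_le_one (le_of_tendsto' hratio fun n => (hS n).trans (measure_mono ?_))
  exact fun ω hω => eventually_atTop.2 ⟨n, hω⟩

end BernoulliProduct

/-- Suppose `a k > r k` (i.e. `δ k > 1`) for all `k`, where `r k = ∑_{i > k} a i` is the
tail of the positive series `∑ a k = 1`.  The distribution of `φ = ∑ φₖ aₖ` (where the
`φₖ` are independent with `P(φₖ = 0) = p₀ₖ`, `P(φₖ = 1) = p₁ₖ`) is purely discrete
(there is a countable set of full measure) if and only if the infinite product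
`∏ max{p₀ₖ, p₁ₖ}` is strictly positive.  Since each factor lies in `[0,1]`, the
infinite product is the infimum of the partial products. -/
theorem distribution_discrete_iff_product_max_pos
    (a : ℕ → ℝ) (ha : ∀ k, 0 < a k) (hsum : ∑' k, a k = 1)
    (r : ℕ → ℝ) (hr : ∀ k, r k = ∑' i : ℕ, a (k + 1 + i))
    (hδ : ∀ k, r k < a k)
    (p₀ p₁ : ℕ → ℝ) (h₀ : ∀ k, 0 ≤ p₀ k) (h₁ : ∀ k, 0 ≤ p₁ k)
    (hp : ∀ k, p₀ k + p₁ k = 1)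
    (P : Measure (ℕ → Bool))
    (hP : IsProductMeasure (fun k => bernoulliMeasure (p₀ k) (p₁ k)) P)
    (μφ : Measure ℝ)
    (hμφ : μφ = Measure.map (fun ω : ℕ → Bool => ∑' k : ℕ, if ω k then a k else 0) P) :
    (∃ D : Set ℝ, D.Countable ∧ μφ D = 1) ↔
      0 < ⨅ n : ℕ, ∏ k ∈ Finset.range n, max (p₀ k) (p₁ k) := by
  have hs : Summable a := by
    by_contra h
    simp [tsum_eq_zero_of_not_summable h] at hsum
  have hf : Measurable (bitSeries a) := measurable_bitSeries (fun k => (ha k).le) hs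
  have hM0 k : 0 < max (p₀ k) (p₁ k) := by
    rcases (h₀ k).eq_or_lt with h | h
    · exact lt_max_of_lt_right (by linarith [hp k])
    · exact lt_max_of_lt_left h
  have hM1 k : max (p₀ k) (p₁ k) ≤ 1 := max_le (by linarith [h₁ k, hp k]) (by linarith [h₀ k, hp k])
  have := hP.isProbabilityMeasure
  subst hμφ
  constructor
  · rintro ⟨D, hD, hD1⟩
    refine (le_ciInf fun n => Finset.prod_nonneg fun k _ => (hM0 k).le).lt_of_ne' fun h => ?_
    have : NullSingletonClass P :=
      ⟨measure_singleton_eq_zero_of_iInf_prod_max_eq_zero hP (fun k => (hM0 k).le) hM1 h⟩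
    have hgap k : ∑' i, a (k + 1 + i) < a k := hr k ▸ hδ k
    have hD0 := map_apply_countable_eq_zero hf
      (bitSeries_injective (fun k => (ha k).le) hs hgap) hD (μ := P)
    exact zero_ne_one (hD0.symm.trans hD1)
  · intro hpos
    exact ⟨_, (countable_setOf_eventually_eq _).image (bitSeries a),
      map_image_eq_one hf (measure_eventually_eq_decide_le_eq_one hP hM0 hM1 hpos)⟩
end

section
/- The distribution of φ = Σ_{k=1}^∞ φ_k a_k is of pure type: it is either purely discrete (there is a countable set of full measure), or purely absolutely continuous with respect to Lebesgue measure on ℝ, or purely singular continuous (mutually singular with Lebesgue measure and with no atoms). -/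
/-!
For a Borel set `B` invariant under translation by the countable group `G` generated by the `aₖ`,
the event `φ ∈ B` does not depend on any finite set of coordinates (changing finitely many `φₖ`
moves `φ` by an element of `G`), so it has probability `0` or `1` by Kolmogorov's zero-one law.
Saturating under `G` keeps countable sets countable and Lebesgue-null sets null. Applied to the
set of atoms of the law of `φ`, the zero-one law makes it discrete or atomless; applied to a null
set carrying its singular part, it makes it absolutely continuous or singular.
-/

open MeasureTheory

open Set

namespace AddSubgroup

variable {α : Type*} [AddCommGroup α]

theorem countable_closure_range {ι : Type*} [Countable ι] (v : ι → α) :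
    Countable (closure (range v)) := by
  rw [← Submodule.span_int_eq_addSubgroupClosure, ← Finsupp.range_linearCombination]
  exact (countable_range _).to_subtype

def IsTranslationInvariant (G : AddSubgroup α) (B : Set α) : Prop :=
  ∀ g ∈ G, ∀ x, x + g ∈ B ↔ x ∈ B

def saturation (G : AddSubgroup α) (C : Set α) : Set α :=
  ⋃ g : G, (· + (g : α)) ⁻¹' C

variable (G : AddSubgroup α) {C : Set α}

theorem subset_saturation : C ⊆ G.saturation C :=
  fun x hx => mem_iUnion.2 ⟨0, by simpa using hx⟩

theorem isTranslationInvariant_saturation : G.IsTranslationInvariant (G.saturation C) := by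
  intro g hg x
  simp only [saturation, mem_iUnion, mem_preimage, Subtype.exists, exists_prop]
  constructor
  · rintro ⟨h, hh, hx⟩
    exact ⟨g + h, G.add_mem hg hh, by rwa [← add_assoc]⟩
  · rintro ⟨h, hh, hx⟩
    exact ⟨h - g, G.sub_mem hh hg, by rwa [add_add_sub_cancel]⟩

variable [Countable G]

theorem countable_saturation (hC : C.Countable) : (G.saturation C).Countable :=
  countable_iUnion fun _ => hC.preimage (add_left_injective _)

variable [MeasurableSpace α] [MeasurableAdd α]

theorem measurableSet_saturation (hC : MeasurableSet C) : MeasurableSet (G.saturation C) :=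
  .iUnion fun _ => hC.preimage (measurable_add_const _)

theorem measure_saturation_eq_zero (ν : Measure α) [ν.IsAddRightInvariant] (hC : ν C = 0) :
    ν (G.saturation C) = 0 :=
  measure_iUnion_null fun _ => (measure_preimage_add_right ν _ C).trans hC

end AddSubgroup

section PureType

variable {α : Type*} [AddCommGroup α] [MeasurableSpace α] {G : AddSubgroup α} [Countable G]
  {μ : Measure α} [IsProbabilityMeasure μ]

theorem exists_countable_measure_eq_one_or_forall_measure_singleton_eq_zero
    [MeasurableSingletonClass α]
    (h01 : ∀ B, MeasurableSet B → G.IsTranslationInvariant B → μ B = 0 ∨ μ B = 1) :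
    (∃ D : Set α, D.Countable ∧ μ D = 1) ∨ ∀ x, μ {x} = 0 := by
  have hatoms : {x | 0 < μ {x}}.Countable :=
    Measure.countable_meas_pos_of_disjoint_iUnion (fun _ => measurableSet_singleton _)
      fun _ _ hxy => disjoint_singleton.2 hxy
  have hsat := G.countable_saturation hatoms
  rcases h01 _ hsat.measurableSet G.isTranslationInvariant_saturation with h0 | h1
  · refine Or.inr fun x => ?_
    by_contra hx
    have hx' : x ∈ G.saturation {x | 0 < μ {x}} := G.subset_saturation (pos_iff_ne_zero.2 hx)
    exact hx (measure_mono_null (singleton_subset_iff.2 hx') h0)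
  · exact Or.inl ⟨_, hsat, h1⟩

theorem absolutelyContinuous_or_mutuallySingular [MeasurableAdd α] (ν : Measure α)
    [ν.IsAddRightInvariant] [μ.HaveLebesgueDecomposition ν]
    (h01 : ∀ B, MeasurableSet B → G.IsTranslationInvariant B → μ B = 0 ∨ μ B = 1) :
    μ ≪ ν ∨ μ ⟂ₘ ν := by
  set S := (μ.mutuallySingular_singularPart ν).nullSet
  have hN : ν (G.saturation Sᶜ) = 0 :=
    G.measure_saturation_eq_zero ν (μ.mutuallySingular_singularPart ν).measure_compl_nullSet
  have hNm : MeasurableSet (G.saturation Sᶜ) :=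
    G.measurableSet_saturation (μ.mutuallySingular_singularPart ν).measurableSet_nullSet.compl
  rcases h01 _ hNm G.isTranslationInvariant_saturation with h0 | h1
  · refine Or.inl ((μ.singularPart_eq_zero ν).1 (Measure.measure_univ_eq_zero.1 ?_))
    refine le_antisymm ?_ zero_le
    calc μ.singularPart ν univ ≤ μ.singularPart ν S + μ.singularPart ν Sᶜ :=
          measure_univ_le_add_compl S
      _ ≤ 0 + μ (G.saturation Sᶜ) := by
          refine add_le_add (μ.mutuallySingular_singularPart ν).measure_nullSet.le ?_
          exact (Measure.le_iff'.1 (μ.singularPart_le ν) _).trans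
            (measure_mono (G.subset_saturation))
      _ = 0 := by rw [h0, add_zero]
  · exact Or.inr ⟨_, hNm.compl, prob_compl_eq_zero_iff hNm |>.2 h1, by rw [compl_compl]; exact hN⟩

end PureType

section ProductMeasure

open ProbabilityTheory

variable {μ : ℕ → Measure Bool} {P : Measure (ℕ → Bool)}

theorem IsProductMeasure.isProbabilityMeasure_s15 (hP : IsProductMeasure μ P) :
    IsProbabilityMeasure P :=
  ⟨by simpa using hP ∅ fun _ => univ⟩

theorem IsProductMeasure.measure_preimage_eval (hP : IsProductMeasure μ P) (k : ℕ)
    (E : Set Bool) : P ((fun ω => ω k) ⁻¹' E) = μ k E := by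
  simpa [preimage] using hP {k} fun _ => E

theorem IsProductMeasure.iIndepFun_eval (hP : IsProductMeasure μ P) :
    iIndepFun (fun k (ω : ℕ → Bool) => ω k) P := by
  refine iIndepFun_iff_measure_inter_preimage_eq_mul.2 fun S E _ => ?_
  have hcyl : (⋂ k ∈ S, (fun ω : ℕ → Bool => ω k) ⁻¹' E k) = {ω | ∀ k ∈ S, ω k ∈ E k} := by
    ext; simp
  rw [hcyl, hP S E]
  exact Finset.prod_congr rfl fun k _ => (hP.measure_preimage_eval k (E k)).symm

end ProductMeasure

noncomputable def bitSum (a : ℕ → ℝ) (ω : ℕ → Bool) : ℝ :=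
  ∑' k, if ω k then a k else 0

section BitSum

open ProbabilityTheory Filter

variable {a : ℕ → ℝ}

theorem summable_bits (ha : Summable a) (ω : ℕ → Bool) :
    Summable fun k => if ω k then a k else 0 :=
  ha.norm.of_norm_bounded fun k => by split_ifs <;> simp

theorem continuous_bitSum (ha : Summable a) : Continuous (bitSum a) :=
  continuous_tsum
    (fun k => (continuous_of_discreteTopology (f := fun b : Bool => if b then a k else 0)).comp
      (continuous_apply k))
    ha.norm fun k ω => by split_ifs <;> simp

theorem bitSum_eq_sum_add_bitSum_shift (ha : Summable a) (n : ℕ) (ω : ℕ → Bool) :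
    bitSum a ω = ∑ k ∈ Finset.range n, (if ω k then a k else 0) +
      bitSum (fun k => a (k + n)) (fun k => ω (k + n)) :=
  ((summable_bits ha ω).sum_add_tsum_nat_add n).symm

theorem measurable_shift (n : ℕ) :
    Measurable[⨆ k ≥ n, MeasurableSpace.comap (fun ω : ℕ → Bool => ω k) inferInstance]
      fun (ω : ℕ → Bool) k => ω (k + n) :=
  -- the source σ-algebra is not the instance one, so it has to be passed explicitly
  @measurable_pi_lambda _ _ _ (_) _ _ fun k =>
    (comap_measurable _).mono (le_iSup₂_of_le (k + n) (by omega) le_rfl) le_rfl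

theorem measure_bitSum_preimage_eq_zero_or_one {P : Measure (ℕ → Bool)} [IsProbabilityMeasure P]
    (hP : iIndepFun (fun k (ω : ℕ → Bool) => ω k) P) (ha : Summable a) {B : Set ℝ}
    (hB : MeasurableSet B) (hinv : (AddSubgroup.closure (range a)).IsTranslationInvariant B) :
    P (bitSum a ⁻¹' B) = 0 ∨ P (bitSum a ⁻¹' B) = 1 := by
  rw [iIndepFun_iff_iIndep] at hP
  refine measure_zero_or_one_of_measurableSet_limsup_atTop
    (fun k => (measurable_pi_apply k).comap_le) hP ?_
  rw [limsup_eq_iInf_iSup_of_nat, MeasurableSpace.measurableSet_iInf]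
  intro n
  have hhead (ω : ℕ → Bool) :
      ∑ k ∈ Finset.range n, (if ω k then a k else 0) ∈ AddSubgroup.closure (range a) :=
    AddSubgroup.sum_mem _ fun k _ => by
      split_ifs
      exacts [AddSubgroup.subset_closure (mem_range_self k), zero_mem _]
  have htail : bitSum a ⁻¹' B =
      (fun ω k => ω (k + n)) ⁻¹' (bitSum (fun k => a (k + n)) ⁻¹' B) := by
    ext ω
    rw [mem_preimage, bitSum_eq_sum_add_bitSum_shift ha n ω, add_comm, hinv _ (hhead ω)]
    rfl
  rw [htail]
  exact measurable_shift n ((continuous_bitSum ((summable_nat_add_iff n).2 ha)).measurable hB)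

end BitSum

theorem distribution_pure_type_general
    (a : ℕ → ℝ) (hsum : ∑' k, a k = 1)
    (p₀ p₁ : ℕ → ℝ)
    (P : Measure (ℕ → Bool))
    (hP : IsProductMeasure (fun k => bernoulliMeasure (p₀ k) (p₁ k)) P)
    (μφ : Measure ℝ)
    (hμφ : μφ = Measure.map (fun ω : ℕ → Bool => ∑' k : ℕ, if ω k then a k else 0) P) :
    (∃ D : Set ℝ, D.Countable ∧ μφ D = 1) ∨
      μφ ≪ volume ∨
      (μφ.MutuallySingular volume ∧ ∀ x : ℝ, μφ {x} = 0) := by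
  have ha : Summable a := by
    by_contra h
    simp [tsum_eq_zero_of_not_summable h] at hsum
  have hφ : Measurable (bitSum a) := (continuous_bitSum ha).measurable
  replace hμφ : μφ = P.map (bitSum a) := hμφ
  have := hP.isProbabilityMeasure_s15
  have : IsProbabilityMeasure μφ := hμφ ▸ Measure.isProbabilityMeasure_map hφ.aemeasurable
  have := AddSubgroup.countable_closure_range a
  have h01 (B : Set ℝ) (hB : MeasurableSet B)
      (hinv : (AddSubgroup.closure (range a)).IsTranslationInvariant B) :
      μφ B = 0 ∨ μφ B = 1 := by
    rw [hμφ, Measure.map_apply hφ hB]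
    exact measure_bitSum_preimage_eq_zero_or_one hP.iIndepFun_eval ha hB hinv
  rcases exists_countable_measure_eq_one_or_forall_measure_singleton_eq_zero h01 with
    hdiscrete | hatomless
  · exact Or.inl hdiscrete
  rcases absolutelyContinuous_or_mutuallySingular volume h01 with hac | hsing
  · exact Or.inr (Or.inl hac)
  · exact Or.inr (Or.inr ⟨hsing, hatomless⟩)

/-- Pure type theorem (Jessen–Wintner): the distribution of `φ = ∑ φₖ aₖ` (where the
`φₖ` are independent with `P(φₖ = 0) = p₀ₖ`, `P(φₖ = 1) = p₁ₖ` and `∑ aₖ = 1`,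
`aₖ > 0`) is either purely discrete (there is a countable set of full measure), or
purely absolutely continuous with respect to Lebesgue measure, or purely singular
continuous (mutually singular with Lebesgue measure and without atoms). -/
theorem distribution_pure_type
    (a : ℕ → ℝ) (ha : ∀ k, 0 < a k) (hsum : ∑' k, a k = 1)
    (p₀ p₁ : ℕ → ℝ) (h₀ : ∀ k, 0 ≤ p₀ k) (h₁ : ∀ k, 0 ≤ p₁ k)
    (hp : ∀ k, p₀ k + p₁ k = 1)
    (P : Measure (ℕ → Bool))
    (hP : IsProductMeasure (fun k => bernoulliMeasure (p₀ k) (p₁ k)) P)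
    (μφ : Measure ℝ)
    (hμφ : μφ = Measure.map (fun ω : ℕ → Bool => ∑' k : ℕ, if ω k then a k else 0) P) :
    (∃ D : Set ℝ, D.Countable ∧ μφ D = 1) ∨
      μφ ≪ volume ∨
      (μφ.MutuallySingular volume ∧ ∀ x : ℝ, μφ {x} = 0) :=
  distribution_pure_type_general a hsum p₀ p₁ P hP μφ hμφ
end
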